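/- Let L₀₁ = graph(u) ⊆ ΠV₀ ⊕ V₁ and L₁₂ = graph(v) ⊆ ΠV₁ ⊕ V₂ be Lagrangian correspondences given by unitaries u, v with blocks u_{ij}, v_{ij}. If 1 - v₁₁u₁₁ and 1 - u₁₁v₁₁ have closed range, then the composition L₁₂ ∘ L₀₁ is a Lagrangian in ΠV₀ ⊕ V₂, equal to the graph of the unitary w with blocks w₀₀ = u₀₀ + u₀₁ X v₁₁ u₁₀, w₀₂ = u₀₁ X v₁₂, w₂₀ = v₂₁ Y u₁₀, w₂₂ = v₂₂ + v₂₁ Y u₁₁ v₁₂, where X and Y are the generalized (Moore–Penrose) inverses of 1 - v₁₁u₁₁ and 1 - u₁₁v₁₁ respectively. -/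

import Mathlib

/-!
A point of `L₁₂ ∘ L₀₁` over the incoming data `(b, c) ∈ V₀⁻ ⊕ V₂⁺` is an intermediate point
`(x, y) ∈ V₁⁺ ⊕ V₁⁻` with `y = u₁₀ b + u₁₁ x` and `x = v₁₁ y + v₁₂ c`, i.e.
`(1 - v₁₁u₁₁) x = v₁₁u₁₀ b + v₁₂ c`. Since `u` and `v` are contractions, a norm squeeze shows
that `u₀₁` and `v₂₁u₁₁` vanish on `ker (1 - v₁₁u₁₁)` and `v₂₁` on `ker (1 - u₁₁v₁₁)`, so the
outgoing data do not depend on the choice of `(x, y)`; the choice `x = X (v₁₁u₁₀ b + v₁₂ c)`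
gives the blocks of `w`. The same squeeze for `u†, v†` puts the right-hand side in
`(ker (1 - v₁₁u₁₁)†)ᗮ`, the closure of the range, where `X` still inverts by continuity, so
intermediate points exist. Adding the norm identities of `u` and `v` at an intermediate point
shows that `w` is isometric, and solving the adjoint system produces preimages, so `w` is
unitary and its graph is Lagrangian.
-/

noncomputable section

open Submodule ContinuousLinearMap

/-- Build an element of the `L²`-product from its two components. -/
abbrev p2 {α β : Type*} [AddCommGroup α] [Module ℝ α] [AddCommGroup β] [Module ℝ β]
    (a : α) (b : β) : WithLp 2 (α × β) :=
  (WithLp.linearEquiv 2 ℝ (α × β)).symm (a, b)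

/-- The `L²`-product as a linear equiv with the plain product. -/
abbrev unL2 {α β : Type*} [AddCommGroup α] [Module ℝ α] [AddCommGroup β] [Module ℝ β] :
    WithLp 2 (α × β) →ₗ[ℝ] α × β :=
  (WithLp.linearEquiv 2 ℝ (α × β)).toLinearMap

abbrev mkL2 {α β : Type*} [AddCommGroup α] [Module ℝ α] [AddCommGroup β] [Module ℝ β] :
    (α × β) →ₗ[ℝ] WithLp 2 (α × β) :=
  ((WithLp.linearEquiv 2 ℝ (α × β)).symm : (α × β) ≃ₗ[ℝ] WithLp 2 (α × β)).toLinearMap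

section Defs

variable {Vp Vm : Type*} [NormedAddCommGroup Vp] [InnerProductSpace ℝ Vp]
  [NormedAddCommGroup Vm] [InnerProductSpace ℝ Vm]

/-- The grading operator `Γ` on the super Hilbert space `V = Vp ⊕ Vm` (`Γ = 1` on `V⁺ = Vp`,
`Γ = -1` on `V⁻ = Vm`). -/
def sGrading : WithLp 2 (Vp × Vm) →ₗ[ℝ] WithLp 2 (Vp × Vm) :=
  mkL2 ∘ₗ ((LinearMap.fst ℝ Vp Vm).prod (-(LinearMap.snd ℝ Vp Vm))) ∘ₗ unL2

/-- `L` is isotropic for the form `B(x, y) = ⟪J x, y⟫`. -/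
def IsIsotropicWith {W : Type*} [NormedAddCommGroup W] [InnerProductSpace ℝ W]
    (J : W →ₗ[ℝ] W) (L : Submodule ℝ W) : Prop :=
  ∀ x ∈ L, ∀ y ∈ L, (inner ℝ (J x) y : ℝ) = 0

/-- `L` is a Lagrangian with respect to the grading `J`, i.e. `J L = Lᗮ`. -/
def IsLagrangianWith {W : Type*} [NormedAddCommGroup W] [InnerProductSpace ℝ W]
    (J : W →ₗ[ℝ] W) (L : Submodule ℝ W) : Prop :=
  L.map J = Lᗮ

/-- `L ⊆ V = Vp ⊕ Vm` is `B`-isotropic, where `B(x,y) = ⟪Γ x, y⟫`. -/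
def IsIsotropic (L : Submodule ℝ (WithLp 2 (Vp × Vm))) : Prop :=
  IsIsotropicWith sGrading L

/-- The image `Γ L` of a subspace under the grading operator. -/
def gradingMap (L : Submodule ℝ (WithLp 2 (Vp × Vm))) : Submodule ℝ (WithLp 2 (Vp × Vm)) :=
  L.map sGrading

/-- `L` is a Lagrangian in the super Hilbert space `Vp ⊕ Vm`: `Γ L = Lᗮ`. -/
def IsLagrangian (L : Submodule ℝ (WithLp 2 (Vp × Vm))) : Prop :=
  IsLagrangianWith sGrading L

/-- The restricted graph `graph′(u) = graph(u) ∩ (ker u)ᗮ` of `u : V⁺ → V⁻`, inside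
`V = Vp ⊕ Vm`. -/
def graphPI (u : Vp →L[ℝ] Vm) : Submodule ℝ (WithLp 2 (Vp × Vm)) :=
  (LinearMap.ker u.toLinearMap)ᗮ.map (mkL2 ∘ₗ (LinearMap.id : Vp →ₗ[ℝ] Vp).prod u.toLinearMap)

/-- The full graph `graph(u) = {(x, u x)}` of `u : V⁺ → V⁻`, inside `V = Vp ⊕ Vm`. -/
def graphFull (u : Vp →ₗ[ℝ] Vm) : Submodule ℝ (WithLp 2 (Vp × Vm)) :=
  (⊤ : Submodule ℝ Vp).map (mkL2 ∘ₗ (LinearMap.id : Vp →ₗ[ℝ] Vp).prod u)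

/-- The restricted graph of an operator `w : V⁻ → V⁺`, viewed inside `V = Vp ⊕ Vm`
via `y ↦ (w y, y)`. -/
def graphPIrev (w : Vm →L[ℝ] Vp) : Submodule ℝ (WithLp 2 (Vp × Vm)) :=
  (LinearMap.ker w.toLinearMap)ᗮ.map (mkL2 ∘ₗ w.toLinearMap.prod (LinearMap.id : Vm →ₗ[ℝ] Vm))

/-- `u` is a partial isometry: it is isometric on `(ker u)ᗮ`. -/
def IsPartialIsometry (u : Vp →L[ℝ] Vm) : Prop :=
  ∀ x ∈ (LinearMap.ker u.toLinearMap)ᗮ, ‖u x‖ = ‖x‖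

/-- `u` is unitary: a surjective isometry. -/
def IsUnitaryOp {E F : Type*} [NormedAddCommGroup E] [InnerProductSpace ℝ E]
    [NormedAddCommGroup F] [InnerProductSpace ℝ F] (u : E →L[ℝ] F) : Prop :=
  (∀ x, ‖u x‖ = ‖x‖) ∧ Function.Surjective u

end Defs

section CorrDefs

variable {Ap Am Bp Bm : Type*} [NormedAddCommGroup Ap] [InnerProductSpace ℝ Ap]
  [NormedAddCommGroup Am] [InnerProductSpace ℝ Am]
  [NormedAddCommGroup Bp] [InnerProductSpace ℝ Bp]
  [NormedAddCommGroup Bm] [InnerProductSpace ℝ Bm]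

/-- The grading `Γ(x₀, x₁) = (-Γ₀ x₀, Γ₁ x₁)` on `Π V₀ ⊕ V₁`, where `V₀ = Ap ⊕ Am` and
`V₁ = Bp ⊕ Bm`. -/
def corrGrading :
    WithLp 2 (WithLp 2 (Ap × Am) × WithLp 2 (Bp × Bm)) →ₗ[ℝ]
      WithLp 2 (WithLp 2 (Ap × Am) × WithLp 2 (Bp × Bm)) :=
  mkL2 ∘ₗ ((-(sGrading : WithLp 2 (Ap × Am) →ₗ[ℝ] WithLp 2 (Ap × Am))).prodMap
    (sGrading : WithLp 2 (Bp × Bm) →ₗ[ℝ] WithLp 2 (Bp × Bm))) ∘ₗ unL2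

/-- `L` is a Lagrangian correspondence from `V₀ = Ap ⊕ Am` to `V₁ = Bp ⊕ Bm`, i.e. a
Lagrangian in `Π V₀ ⊕ V₁`. -/
def IsLagCorr (L : Submodule ℝ (WithLp 2 (WithLp 2 (Ap × Am) × WithLp 2 (Bp × Bm)))) : Prop :=
  IsLagrangianWith corrGrading L

/-- `L` is `B`-isotropic in `Π V₀ ⊕ V₁`. -/
def IsIsotropicCorr (L : Submodule ℝ (WithLp 2 (WithLp 2 (Ap × Am) × WithLp 2 (Bp × Bm)))) :
    Prop :=
  IsIsotropicWith corrGrading L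

/-- The graph of a map `u : (ΠV₀ ⊕ V₁)⁺ = V₀⁻ ⊕ V₁⁺ → V₀⁺ ⊕ V₁⁻ = (ΠV₀ ⊕ V₁)⁻`, as a linear
map into `ΠV₀ ⊕ V₁`; an element `(b, c)` is sent to `((u(b,c)₁, b), (c, u(b,c)₂))`. -/
def corrGraphMap (u : WithLp 2 (Am × Bp) →L[ℝ] WithLp 2 (Ap × Bm)) :
    WithLp 2 (Am × Bp) →ₗ[ℝ] WithLp 2 (WithLp 2 (Ap × Am) × WithLp 2 (Bp × Bm)) :=
  mkL2 ∘ₗ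
    ((mkL2 ∘ₗ (((LinearMap.fst ℝ Ap Bm) ∘ₗ unL2 ∘ₗ u.toLinearMap).prod
        ((LinearMap.fst ℝ Am Bp) ∘ₗ unL2))).prod
      (mkL2 ∘ₗ (((LinearMap.snd ℝ Am Bp) ∘ₗ unL2).prod
        ((LinearMap.snd ℝ Ap Bm) ∘ₗ unL2 ∘ₗ u.toLinearMap))))

/-- The graph of `u : (ΠV₀ ⊕ V₁)⁺ → (ΠV₀ ⊕ V₁)⁻` as a subspace of `ΠV₀ ⊕ V₁`. -/
def corrGraph (u : WithLp 2 (Am × Bp) →L[ℝ] WithLp 2 (Ap × Bm)) :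
    Submodule ℝ (WithLp 2 (WithLp 2 (Ap × Am) × WithLp 2 (Bp × Bm))) :=
  LinearMap.range (corrGraphMap u)

end CorrDefs

section Comp

variable {W0 W1 W2 : Type*} [NormedAddCommGroup W0] [InnerProductSpace ℝ W0]
  [NormedAddCommGroup W1] [InnerProductSpace ℝ W1]
  [NormedAddCommGroup W2] [InnerProductSpace ℝ W2]

/-- The composition `L₁₂ ∘ L₀₁ = {(x₀, x₂) | ∃ x₁, (x₀, x₁) ∈ L₀₁ ∧ (x₁, x₂) ∈ L₁₂}` of two
correspondences `L₀₁ ⊆ W0 ⊕ W1` and `L₁₂ ⊆ W1 ⊕ W2`. -/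
def compCorr (L01 : Submodule ℝ (WithLp 2 (W0 × W1))) (L12 : Submodule ℝ (WithLp 2 (W1 × W2))) :
    Submodule ℝ (WithLp 2 (W0 × W2)) :=
  Submodule.map
    (mkL2 ∘ₗ
      (((LinearMap.fst ℝ W0 W1 ∘ₗ unL2) ∘ₗ
          LinearMap.fst ℝ (WithLp 2 (W0 × W1)) (WithLp 2 (W1 × W2))).prod
        ((LinearMap.snd ℝ W1 W2 ∘ₗ unL2) ∘ₗ
          LinearMap.snd ℝ (WithLp 2 (W0 × W1)) (WithLp 2 (W1 × W2)))))
    ((L01.prod L12) ⊓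
      LinearMap.ker
        (((LinearMap.snd ℝ W0 W1 ∘ₗ unL2) ∘ₗ
            LinearMap.fst ℝ (WithLp 2 (W0 × W1)) (WithLp 2 (W1 × W2))) -
          ((LinearMap.fst ℝ W1 W2 ∘ₗ unL2) ∘ₗ
            LinearMap.snd ℝ (WithLp 2 (W0 × W1)) (WithLp 2 (W1 × W2)))))

end Comp

/-- The full graph of a bounded operator `S : E → F`, inside `E ⊕ F`. -/
def graphFullCorr {E F : Type*} [NormedAddCommGroup E] [InnerProductSpace ℝ E]
    [NormedAddCommGroup F] [InnerProductSpace ℝ F] (S : E →L[ℝ] F) :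
    Submodule ℝ (WithLp 2 (E × F)) :=
  (⊤ : Submodule ℝ E).map (mkL2 ∘ₗ (LinearMap.id : E →ₗ[ℝ] E).prod S.toLinearMap)

/-- `u` is a Hilbert–Schmidt operator: `∑ ‖u eᵢ‖²` converges for every Hilbert basis. -/
def IsHilbertSchmidt {E F : Type*} [NormedAddCommGroup E] [InnerProductSpace ℝ E]
    [NormedAddCommGroup F] [InnerProductSpace ℝ F] (u : E →L[ℝ] F) : Prop :=
  ∀ (ι : Type) (b : HilbertBasis ι ℝ E), Summable fun i => ‖u (b i)‖ ^ 2

section Statement15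

variable {V0p V0m V1p V1m V2p V2m : Type*}
  [NormedAddCommGroup V0p] [InnerProductSpace ℝ V0p] [CompleteSpace V0p]
  [NormedAddCommGroup V0m] [InnerProductSpace ℝ V0m] [CompleteSpace V0m]
  [NormedAddCommGroup V1p] [InnerProductSpace ℝ V1p] [CompleteSpace V1p]
  [NormedAddCommGroup V1m] [InnerProductSpace ℝ V1m] [CompleteSpace V1m]
  [NormedAddCommGroup V2p] [InnerProductSpace ℝ V2p] [CompleteSpace V2p]
  [NormedAddCommGroup V2m] [InnerProductSpace ℝ V2m] [CompleteSpace V2m]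

/-- The operator `1 - v₁₁ u₁₁` on `V₁⁺`. -/
def opA (u11 : V1p →L[ℝ] V1m) (v11 : V1m →L[ℝ] V1p) : V1p →L[ℝ] V1p :=
  ContinuousLinearMap.id ℝ V1p - v11.comp u11

/-- The operator `1 - u₁₁ v₁₁` on `V₁⁻`. -/
def opB (u11 : V1p →L[ℝ] V1m) (v11 : V1m →L[ℝ] V1p) : V1m →L[ℝ] V1m :=
  ContinuousLinearMap.id ℝ V1m - u11.comp v11

/-- The unitary `w` describing the composed Lagrangian correspondence: its block matrix is
`[[u₀₀ + u₀₁Xv₁₁u₁₀, u₀₁Xv₁₂], [v₂₁Yu₁₀, v₂₂ + v₂₁Yu₁₁v₁₂]]`. -/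
def compUnitary (u00 : V0m →L[ℝ] V0p) (u01 : V1p →L[ℝ] V0p) (u10 : V0m →L[ℝ] V1m)
    (u11 : V1p →L[ℝ] V1m) (v11 : V1m →L[ℝ] V1p) (v12 : V2p →L[ℝ] V1p) (v21 : V1m →L[ℝ] V2m)
    (v22 : V2p →L[ℝ] V2m) (X : V1p →L[ℝ] V1p) (Y : V1m →L[ℝ] V1m) :
    WithLp 2 (V0m × V2p) →L[ℝ] WithLp 2 (V0p × V2m) :=
  (((WithLp.prodContinuousLinearEquiv 2 ℝ V0p V2m).symm :
      (V0p × V2m) →L[ℝ] WithLp 2 (V0p × V2m)).comp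
    ((((u00 + u01.comp (X.comp (v11.comp u10))).coprod (u01.comp (X.comp v12))).prod
      ((v21.comp (Y.comp u10)).coprod (v22 + v21.comp (Y.comp (u11.comp v12))))))).comp
    ((WithLp.prodContinuousLinearEquiv 2 ℝ V0m V2p : WithLp 2 (V0m × V2p) →L[ℝ] V0m × V2p))

end Statement15

open RealInnerProductSpace

section Pairs

variable {α β : Type*}

section Module

variable [AddCommGroup α] [Module ℝ α] [AddCommGroup β] [Module ℝ β]

@[simp]
theorem p2_fst (a : α) (b : β) : (p2 a b).fst = a := rfl

@[simp]
theorem p2_snd (a : α) (b : β) : (p2 a b).snd = b := rfl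

theorem neg_p2 (a : α) (b : β) : -p2 a b = p2 (-a) (-b) := rfl

theorem p2_inj {a a' : α} {b b' : β} : p2 a b = p2 a' b' ↔ a = a' ∧ b = b' :=
  (WithLp.toLp_injective 2).eq_iff.trans Prod.mk_inj

end Module

theorem norm_p2_sq [NormedAddCommGroup α] [InnerProductSpace ℝ α] [NormedAddCommGroup β]
    [InnerProductSpace ℝ β] (a : α) (b : β) : ‖p2 a b‖ ^ 2 = ‖a‖ ^ 2 + ‖b‖ ^ 2 :=
  WithLp.prod_norm_sq_eq_of_L2 _

end Pairs

section Operators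

variable {E F : Type*} [NormedAddCommGroup E] [InnerProductSpace ℝ E]
  [NormedAddCommGroup F] [InnerProductSpace ℝ F] [CompleteSpace E] [CompleteSpace F]

theorem adjoint_apply_apply_of_norm_map {T : E →L[ℝ] F} (hT : ∀ x, ‖T x‖ = ‖x‖) (x : E) :
    adjoint T (T x) = x :=
  ext_inner_right ℝ fun y => by
    rw [adjoint_inner_left]
    exact (LinearIsometry.mk (T : E →ₗ[ℝ] F) hT).inner_map_map x y

theorem IsUnitaryOp.apply_adjoint_apply {T : E →L[ℝ] F} (hT : IsUnitaryOp T) (y : F) :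
    T (adjoint T y) = y := by
  obtain ⟨x, rfl⟩ := hT.2 y
  rw [adjoint_apply_apply_of_norm_map hT.1]

theorem norm_adjoint_apply_le {A : E →L[ℝ] F} (hA : ∀ x, ‖A x‖ ≤ ‖x‖) (y : F) :
    ‖adjoint A y‖ ≤ ‖y‖ :=
  calc ‖adjoint A y‖ ≤ ‖adjoint A‖ * ‖y‖ := (adjoint A).le_opNorm y
    _ = ‖A‖ * ‖y‖ := by rw [LinearIsometryEquiv.norm_map]
    _ ≤ 1 * ‖y‖ := by
      gcongr
      exact A.opNorm_le_bound zero_le_one fun x => by simpa using hA x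
    _ = ‖y‖ := one_mul _

/-- By continuity `X` inverts `A` on the closure of its range, which is `(ker A†)ᗮ`. -/
theorem apply_apply_eq_of_mem_orthogonal_ker_adjoint {A : E →L[ℝ] F} {X : F →L[ℝ] E}
    (hX : ∀ b ∈ LinearMap.range A.toLinearMap, A (X b) = b) {r : F}
    (hr : r ∈ (LinearMap.ker (adjoint A).toLinearMap)ᗮ) : A (X r) = r := by
  rw [orthogonal_ker, adjoint_adjoint, ← SetLike.mem_coe, Submodule.topologicalClosure_coe] at hr
  exact Set.EqOn.closure (f := A ∘ X) (g := id) (fun b hb => hX b hb) (by fun_prop)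
    continuous_id hr

theorem adjoint_apply_adjoint_apply_of_mem_range {A : E →L[ℝ] F} {X : F →L[ℝ] E}
    (hX : ∀ b ∈ LinearMap.range A.toLinearMap, A (X b) = b) :
    ∀ b ∈ LinearMap.range (adjoint A).toLinearMap, adjoint A (adjoint X b) = b := by
  rintro _ ⟨c, rfl⟩
  refine ext_inner_right ℝ fun y => ?_
  simp only [ContinuousLinearMap.coe_coe, adjoint_inner_left, hX (A y) ⟨y, rfl⟩]

end Operators

theorem apply_eq_apply_of_ker_le {R E F G : Type*} [Ring R] [AddCommGroup E] [Module R E]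
    [AddCommGroup F] [Module R F] [AddCommGroup G] [Module R G] {A : E →ₗ[R] F} {X : F →ₗ[R] E}
    {P : E →ₗ[R] G} (hX : ∀ b ∈ LinearMap.range A, A (X b) = b)
    (hP : LinearMap.ker A ≤ LinearMap.ker P) (x : E) : P x = P (X (A x)) := by
  rw [← sub_eq_zero, ← map_sub]
  exact hP (by rw [LinearMap.mem_ker, map_sub, hX _ ⟨x, rfl⟩, sub_self])

theorem eq_zero_of_norm_sq_le_of_apply_eq_self {E F G H : Type*} [NormedAddCommGroup E]
    [NormedAddCommGroup F] [NormedAddCommGroup G] [NormedAddCommGroup H]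
    {T : E → F} {S : F → E} {P : E → G} {Q : F → H} {k : E}
    (hT : ‖P k‖ ^ 2 + ‖T k‖ ^ 2 ≤ ‖k‖ ^ 2) (hS : ‖S (T k)‖ ^ 2 + ‖Q (T k)‖ ^ 2 ≤ ‖T k‖ ^ 2)
    (hk : S (T k) = k) : P k = 0 ∧ Q (T k) = 0 := by
  rw [hk] at hS
  have hP : ‖P k‖ ^ 2 = 0 := by nlinarith [sq_nonneg ‖P k‖, sq_nonneg ‖Q (T k)‖]
  have hQ : ‖Q (T k)‖ ^ 2 = 0 := by nlinarith [sq_nonneg ‖P k‖, sq_nonneg ‖Q (T k)‖]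
  simpa using And.intro hP hQ

section Blocks

variable {E₁ E₂ F₁ F₂ : Type*} [NormedAddCommGroup E₁] [InnerProductSpace ℝ E₁]
  [NormedAddCommGroup E₂] [InnerProductSpace ℝ E₂]
  [NormedAddCommGroup F₁] [InnerProductSpace ℝ F₁]
  [NormedAddCommGroup F₂] [InnerProductSpace ℝ F₂]

def HasBlocks (w : WithLp 2 (E₁ × E₂) →L[ℝ] WithLp 2 (F₁ × F₂)) (a : E₁ →L[ℝ] F₁)
    (b : E₂ →L[ℝ] F₁) (c : E₁ →L[ℝ] F₂) (d : E₂ →L[ℝ] F₂) : Prop :=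
  ∀ x, w x = p2 (a x.fst + b x.snd) (c x.fst + d x.snd)

variable {w : WithLp 2 (E₁ × E₂) →L[ℝ] WithLp 2 (F₁ × F₂)} {a : E₁ →L[ℝ] F₁}
  {b : E₂ →L[ℝ] F₁} {c : E₁ →L[ℝ] F₂} {d : E₂ →L[ℝ] F₂}

theorem HasBlocks.apply_p2 (h : HasBlocks w a b c d) (x₁ : E₁) (x₂ : E₂) :
    w (p2 x₁ x₂) = p2 (a x₁ + b x₂) (c x₁ + d x₂) :=
  h _

theorem HasBlocks.apply_p2_eq_p2_iff (h : HasBlocks w a b c d) {x₁ : E₁} {x₂ : E₂} {y₁ : F₁}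
    {y₂ : F₂} : w (p2 x₁ x₂) = p2 y₁ y₂ ↔ a x₁ + b x₂ = y₁ ∧ c x₁ + d x₂ = y₂ := by
  rw [h.apply_p2, p2_inj]

theorem HasBlocks.norm_sq_add_norm_sq_left_le (h : HasBlocks w a b c d)
    (hw : ∀ x, ‖w x‖ ≤ ‖x‖) (x₁ : E₁) : ‖a x₁‖ ^ 2 + ‖c x₁‖ ^ 2 ≤ ‖x₁‖ ^ 2 := by
  have h₂ := pow_le_pow_left₀ (norm_nonneg _) (hw (p2 x₁ 0)) 2
  rw [h.apply_p2, norm_p2_sq, norm_p2_sq] at h₂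
  simpa using h₂

theorem HasBlocks.norm_sq_add_norm_sq_right_le (h : HasBlocks w a b c d)
    (hw : ∀ x, ‖w x‖ ≤ ‖x‖) (x₂ : E₂) : ‖b x₂‖ ^ 2 + ‖d x₂‖ ^ 2 ≤ ‖x₂‖ ^ 2 := by
  have h₂ := pow_le_pow_left₀ (norm_nonneg _) (hw (p2 0 x₂)) 2
  rw [h.apply_p2, norm_p2_sq, norm_p2_sq] at h₂
  simpa using h₂

theorem HasBlocks.adjoint [CompleteSpace E₁] [CompleteSpace E₂] [CompleteSpace F₁]
    [CompleteSpace F₂] (h : HasBlocks w a b c d) :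
    HasBlocks (adjoint w) (adjoint a) (adjoint c) (adjoint b) (adjoint d) := by
  intro y
  refine ext_inner_right ℝ fun x => ?_
  rw [adjoint_inner_left, h x]
  simp only [WithLp.prod_inner_apply, WithLp.ofLp_fst, WithLp.ofLp_snd, p2_fst, p2_snd,
    inner_add_left, inner_add_right, adjoint_inner_left]
  ring

end Blocks

section Correspondences

variable {Ap Am Bp Bm Cp Cm : Type*} [NormedAddCommGroup Ap] [InnerProductSpace ℝ Ap]
  [NormedAddCommGroup Am] [InnerProductSpace ℝ Am]
  [NormedAddCommGroup Bp] [InnerProductSpace ℝ Bp]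
  [NormedAddCommGroup Bm] [InnerProductSpace ℝ Bm]
  [NormedAddCommGroup Cp] [InnerProductSpace ℝ Cp]
  [NormedAddCommGroup Cm] [InnerProductSpace ℝ Cm]

theorem corrGraphMap_apply (w : WithLp 2 (Am × Bp) →L[ℝ] WithLp 2 (Ap × Bm))
    (z : WithLp 2 (Am × Bp)) :
    corrGraphMap w z = p2 (p2 (w z).fst z.fst) (p2 z.snd (w z).snd) :=
  rfl

theorem corrGrading_corrGraphMap (w : WithLp 2 (Am × Bp) →L[ℝ] WithLp 2 (Ap × Bm))
    (z : WithLp 2 (Am × Bp)) :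
    corrGrading (corrGraphMap w z) = p2 (p2 (-(w z).fst) z.fst) (p2 z.snd (-(w z).snd)) := by
  show p2 (p2 (-(w z).fst) (-(-z.fst))) (p2 z.snd (-(w z).snd)) = _
  rw [neg_neg]

theorem inner_corrGraphMap (w : WithLp 2 (Am × Bp) →L[ℝ] WithLp 2 (Ap × Bm))
    (z : WithLp 2 (Am × Bp)) (m : WithLp 2 (WithLp 2 (Ap × Am) × WithLp 2 (Bp × Bm))) :
    ⟪corrGraphMap w z, m⟫ = ⟪w z, p2 m.fst.fst m.snd.snd⟫ + ⟪z, p2 m.fst.snd m.snd.fst⟫ := by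
  simp only [WithLp.prod_inner_apply, WithLp.ofLp_fst, WithLp.ofLp_snd, corrGraphMap_apply,
    p2_fst, p2_snd]
  ring

variable {w : WithLp 2 (Am × Bp) →L[ℝ] WithLp 2 (Ap × Bm)}
  {m : WithLp 2 (WithLp 2 (Ap × Am) × WithLp 2 (Bp × Bm))}

theorem mem_corrGraph_iff :
    m ∈ corrGraph w ↔ w (p2 m.fst.snd m.snd.fst) = p2 m.fst.fst m.snd.snd := by
  constructor
  · rintro ⟨z, rfl⟩
    rfl
  · intro h
    refine ⟨p2 m.fst.snd m.snd.fst, ?_⟩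
    rw [corrGraphMap_apply, h]
    rfl

theorem mem_map_corrGrading_corrGraph_iff :
    m ∈ (corrGraph w).map corrGrading ↔ w (p2 m.fst.snd m.snd.fst) = -p2 m.fst.fst m.snd.snd := by
  constructor
  · rintro ⟨_, ⟨z, rfl⟩, rfl⟩
    rw [corrGrading_corrGraphMap]
    simp only [p2_fst, p2_snd, neg_p2, neg_neg]
    rfl
  · intro h
    refine ⟨corrGraphMap w (p2 m.fst.snd m.snd.fst), ⟨_, rfl⟩, ?_⟩
    rw [corrGrading_corrGraphMap, h]
    simp only [p2_fst, p2_snd, neg_p2, neg_neg]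
    rfl

theorem mem_orthogonal_corrGraph_iff [CompleteSpace Ap] [CompleteSpace Am] [CompleteSpace Bp]
    [CompleteSpace Bm] :
    m ∈ (corrGraph w)ᗮ ↔ adjoint w (p2 m.fst.fst m.snd.snd) = -p2 m.fst.snd m.snd.fst := by
  rw [Submodule.mem_orthogonal, eq_neg_iff_add_eq_zero]
  constructor
  · intro h
    refine ext_inner_left ℝ fun z => ?_
    rw [inner_add_right, adjoint_inner_right, ← inner_corrGraphMap, inner_zero_right]
    exact h _ ⟨z, rfl⟩
  · rintro h _ ⟨z, rfl⟩
    rw [inner_corrGraphMap, ← adjoint_inner_right, ← inner_add_right, h, inner_zero_right]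

theorem isLagCorr_corrGraph [CompleteSpace Ap] [CompleteSpace Am] [CompleteSpace Bp]
    [CompleteSpace Bm] (hw : IsUnitaryOp w) : IsLagCorr (corrGraph w) := by
  show (corrGraph w).map corrGrading = (corrGraph w)ᗮ
  ext m
  rw [mem_map_corrGrading_corrGraph_iff, mem_orthogonal_corrGraph_iff]
  constructor
  · intro h
    rw [← adjoint_apply_apply_of_norm_map hw.1 (-p2 m.fst.snd m.snd.fst), map_neg, h, neg_neg]
  · intro h
    rw [← hw.apply_adjoint_apply (p2 m.fst.fst m.snd.snd), h, map_neg, neg_neg]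

variable {u : WithLp 2 (Am × Bp) →L[ℝ] WithLp 2 (Ap × Bm)}
  {v : WithLp 2 (Bm × Cp) →L[ℝ] WithLp 2 (Bp × Cm)}
  {m : WithLp 2 (WithLp 2 (Ap × Am) × WithLp 2 (Cp × Cm))}

theorem mem_compCorr_corrGraph_iff :
    m ∈ compCorr (W0 := WithLp 2 (Ap × Am)) (W1 := WithLp 2 (Bp × Bm)) (W2 := WithLp 2 (Cp × Cm))
      (corrGraph u) (corrGraph v) ↔
      ∃ x y, u (p2 m.fst.snd x) = p2 m.fst.fst y ∧ v (p2 y m.snd.fst) = p2 x m.snd.snd := by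
  constructor
  · rintro ⟨⟨_, _⟩, ⟨⟨⟨z₁, rfl⟩, ⟨z₂, rfl⟩⟩, hker⟩, rfl⟩
    have hmatch : p2 z₁.snd (u z₁).snd - p2 (v z₂).fst z₂.fst = 0 := hker
    rw [sub_eq_zero, p2_inj] at hmatch
    refine ⟨z₁.snd, z₂.fst, ?_, ?_⟩
    · show u z₁ = p2 (u z₁).fst z₂.fst
      rw [← hmatch.2]
      rfl
    · show v z₂ = p2 z₁.snd (v z₂).snd
      rw [hmatch.1]
      rfl
  · rintro ⟨x, y, hux, hvy⟩
    refine ⟨(corrGraphMap u (p2 m.fst.snd x), corrGraphMap v (p2 y m.snd.fst)),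
      ⟨⟨⟨_, rfl⟩, ⟨_, rfl⟩⟩, ?_⟩, ?_⟩
    · show p2 x (u _).snd - p2 (v _).fst y = 0
      rw [hux, hvy, p2_snd, p2_fst, sub_self]
    · show p2 (p2 (u _).fst m.fst.snd) (p2 m.snd.fst (v _).snd) = m
      rw [hux, hvy]
      rfl

theorem norm_apply_eq_of_corrGraph_le_compCorr
    {w : WithLp 2 (Am × Cp) →L[ℝ] WithLp 2 (Ap × Cm)} (hu : ∀ x, ‖u x‖ = ‖x‖)
    (hv : ∀ y, ‖v y‖ = ‖y‖)
    (h : corrGraph w ≤ compCorr (W0 := WithLp 2 (Ap × Am)) (W1 := WithLp 2 (Bp × Bm))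
      (W2 := WithLp 2 (Cp × Cm)) (corrGraph u) (corrGraph v)) (z : WithLp 2 (Am × Cp)) :
    ‖w z‖ = ‖z‖ := by
  have hz : corrGraphMap w z ∈ corrGraph w := ⟨z, rfl⟩
  obtain ⟨x, y, hux, hvy⟩ := mem_compCorr_corrGraph_iff.mp (h hz)
  simp only [corrGraphMap_apply, p2_fst, p2_snd] at hux hvy
  have h₁ := congrArg (· ^ 2) (hu (p2 z.fst x))
  have h₂ := congrArg (· ^ 2) (hv (p2 y z.snd))
  simp only [hux, hvy, norm_p2_sq] at h₁ h₂
  rw [← sq_eq_sq₀ (norm_nonneg _) (norm_nonneg _), WithLp.prod_norm_sq_eq_of_L2,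
    WithLp.prod_norm_sq_eq_of_L2]
  linarith

end Correspondences

section Composition

variable {V0p V0m V1p V1m V2p V2m : Type*}
  [NormedAddCommGroup V0p] [InnerProductSpace ℝ V0p] [NormedAddCommGroup V0m]
  [InnerProductSpace ℝ V0m] [NormedAddCommGroup V1p] [InnerProductSpace ℝ V1p]
  [NormedAddCommGroup V1m] [InnerProductSpace ℝ V1m] [NormedAddCommGroup V2p]
  [InnerProductSpace ℝ V2p] [NormedAddCommGroup V2m] [InnerProductSpace ℝ V2m]
  {u : WithLp 2 (V0m × V1p) →L[ℝ] WithLp 2 (V0p × V1m)}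
  {v : WithLp 2 (V1m × V2p) →L[ℝ] WithLp 2 (V1p × V2m)}
  {u00 : V0m →L[ℝ] V0p} {u01 : V1p →L[ℝ] V0p} {u10 : V0m →L[ℝ] V1m} {u11 : V1p →L[ℝ] V1m}
  {v11 : V1m →L[ℝ] V1p} {v12 : V2p →L[ℝ] V1p} {v21 : V1m →L[ℝ] V2m} {v22 : V2p →L[ℝ] V2m}
  {X : V1p →L[ℝ] V1p} {Y : V1m →L[ℝ] V1m}

theorem opA_apply (k : V1p) : opA u11 v11 k = k - v11 (u11 k) := rfl

theorem opB_apply (k : V1m) : opB u11 v11 k = k - u11 (v11 k) := rfl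

theorem apply_eq_zero_of_opA_apply_eq_zero (hub : HasBlocks u u00 u01 u10 u11)
    (hvb : HasBlocks v v11 v12 v21 v22) (hu : ∀ x, ‖u x‖ ≤ ‖x‖) (hv : ∀ y, ‖v y‖ ≤ ‖y‖)
    {k : V1p} (hk : opA u11 v11 k = 0) : u01 k = 0 ∧ v21 (u11 k) = 0 :=
  eq_zero_of_norm_sq_le_of_apply_eq_self (hub.norm_sq_add_norm_sq_right_le hu k)
    (hvb.norm_sq_add_norm_sq_left_le hv (u11 k)) (sub_eq_zero.mp hk).symm

theorem apply_eq_zero_of_opB_apply_eq_zero (hub : HasBlocks u u00 u01 u10 u11)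
    (hvb : HasBlocks v v11 v12 v21 v22) (hu : ∀ x, ‖u x‖ ≤ ‖x‖) (hv : ∀ y, ‖v y‖ ≤ ‖y‖)
    {k : V1m} (hk : opB u11 v11 k = 0) : v21 k = 0 :=
  (eq_zero_of_norm_sq_le_of_apply_eq_self (T := v11) (S := u11) (Q := u01)
    ((add_comm _ _).trans_le (hvb.norm_sq_add_norm_sq_left_le hv k))
    ((add_comm _ _).trans_le (hub.norm_sq_add_norm_sq_right_le hu (v11 k)))
    (sub_eq_zero.mp hk).symm).1

theorem compUnitary_apply_p2 (b : V0m) (c : V2p) :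
    compUnitary u00 u01 u10 u11 v11 v12 v21 v22 X Y (p2 b c) =
      p2 (u00 b + u01 (X (v11 (u10 b) + v12 c))) (v21 (Y (u10 b + u11 (v12 c))) + v22 c) := by
  show p2 ((u00 + u01 ∘L X ∘L v11 ∘L u10) b + (u01 ∘L X ∘L v12) c)
    ((v21 ∘L Y ∘L u10) b + (v22 + v21 ∘L Y ∘L u11 ∘L v12) c) = _
  simp only [add_apply, comp_apply, map_add]
  rw [p2_inj]
  exact ⟨by abel, by abel⟩

theorem compUnitary_apply_of_intermediate (hub : HasBlocks u u00 u01 u10 u11)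
    (hvb : HasBlocks v v11 v12 v21 v22) (hu : ∀ x, ‖u x‖ ≤ ‖x‖) (hv : ∀ y, ‖v y‖ ≤ ‖y‖)
    (hX : ∀ b ∈ LinearMap.range (opA u11 v11).toLinearMap, opA u11 v11 (X b) = b)
    (hY : ∀ b ∈ LinearMap.range (opB u11 v11).toLinearMap, opB u11 v11 (Y b) = b)
    {b : V0m} {x : V1p} {y : V1m} {c : V2p} (hy : u10 b + u11 x = y) (hx : v11 y + v12 c = x) :
    compUnitary u00 u01 u10 u11 v11 v12 v21 v22 X Y (p2 b c) =
      p2 (u00 b + u01 x) (v21 y + v22 c) := by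
  have hAx : opA u11 v11 x = v11 (u10 b) + v12 c := by
    rw [opA_apply]
    nth_rewrite 1 [← hx]
    rw [← hy, map_add]
    abel
  have hBy : opB u11 v11 y = u10 b + u11 (v12 c) := by
    rw [opB_apply]
    nth_rewrite 1 [← hy]
    rw [← hx, map_add]
    abel
  have hu01 : u01 x = u01 (X (opA u11 v11 x)) :=
    apply_eq_apply_of_ker_le hX
      (fun k hk => (apply_eq_zero_of_opA_apply_eq_zero hub hvb hu hv hk).1) x
  have hv21 : v21 y = v21 (Y (opB u11 v11 y)) :=
    apply_eq_apply_of_ker_le hY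
      (fun k hk => apply_eq_zero_of_opB_apply_eq_zero hub hvb hu hv hk) y
  rw [compUnitary_apply_p2, ← hAx, ← hBy, ← hu01, ← hv21]

variable [CompleteSpace V1p] [CompleteSpace V1m]

theorem adjoint_opA : adjoint (opA u11 v11) = opA (adjoint v11) (adjoint u11) := by
  rw [opA, opA, map_sub, adjoint_id, adjoint_comp]

variable [CompleteSpace V0p] [CompleteSpace V2m]

theorem exists_adjoint_intermediate (hub : HasBlocks u u00 u01 u10 u11)
    (hvb : HasBlocks v v11 v12 v21 v22) (hu : ∀ x, ‖u x‖ ≤ ‖x‖) (hv : ∀ y, ‖v y‖ ≤ ‖y‖)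
    (hX : ∀ b ∈ LinearMap.range (opA u11 v11).toLinearMap, opA u11 v11 (X b) = b)
    (a : V0p) (d : V2m) :
    ∃ x, adjoint u01 a + adjoint u11 (adjoint v11 x + adjoint v21 d) = x := by
  have hr : adjoint u01 a + adjoint u11 (adjoint v21 d) ∈
      (LinearMap.ker (adjoint (adjoint (opA u11 v11))).toLinearMap)ᗮ := by
    rw [adjoint_adjoint]
    refine (Submodule.mem_orthogonal _ _).mpr fun k hk => ?_
    obtain ⟨h₁, h₂⟩ := apply_eq_zero_of_opA_apply_eq_zero hub hvb hu hv hk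
    rw [inner_add_right, adjoint_inner_right, adjoint_inner_right, adjoint_inner_right, h₁, h₂,
      inner_zero_left, inner_zero_left, add_zero]
  obtain ⟨x, hx⟩ : ∃ x, adjoint (opA u11 v11) x = adjoint u01 a + adjoint u11 (adjoint v21 d) :=
    ⟨_, apply_apply_eq_of_mem_orthogonal_ker_adjoint
      (adjoint_apply_adjoint_apply_of_mem_range hX) hr⟩
  refine ⟨x, ?_⟩
  rw [adjoint_opA, opA_apply] at hx
  rw [map_add, add_left_comm, ← hx, add_sub_cancel]

variable [CompleteSpace V0m] [CompleteSpace V2p]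

theorem apply_eq_zero_of_adjoint_opA_apply_eq_zero (hub : HasBlocks u u00 u01 u10 u11)
    (hvb : HasBlocks v v11 v12 v21 v22) (hu : ∀ x, ‖u x‖ ≤ ‖x‖) (hv : ∀ y, ‖v y‖ ≤ ‖y‖)
    {z : V1p} (hz : adjoint (opA u11 v11) z = 0) :
    adjoint v12 z = 0 ∧ adjoint u10 (adjoint v11 z) = 0 := by
  rw [adjoint_opA] at hz
  exact eq_zero_of_norm_sq_le_of_apply_eq_self (T := adjoint v11) (S := adjoint u11)
    ((add_comm _ _).trans_le (hvb.adjoint.norm_sq_add_norm_sq_left_le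
      (norm_adjoint_apply_le hv) z))
    ((add_comm _ _).trans_le (hub.adjoint.norm_sq_add_norm_sq_right_le
      (norm_adjoint_apply_le hu) (adjoint v11 z)))
    (sub_eq_zero.mp hz).symm

theorem exists_intermediate (hub : HasBlocks u u00 u01 u10 u11)
    (hvb : HasBlocks v v11 v12 v21 v22) (hu : ∀ x, ‖u x‖ ≤ ‖x‖) (hv : ∀ y, ‖v y‖ ≤ ‖y‖)
    (hX : ∀ b ∈ LinearMap.range (opA u11 v11).toLinearMap, opA u11 v11 (X b) = b)
    (b : V0m) (c : V2p) : ∃ x, v11 (u10 b + u11 x) + v12 c = x := by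
  have hr : v11 (u10 b) + v12 c ∈ (LinearMap.ker (adjoint (opA u11 v11)).toLinearMap)ᗮ := by
    refine (Submodule.mem_orthogonal _ _).mpr fun z hz => ?_
    obtain ⟨h₁, h₂⟩ := apply_eq_zero_of_adjoint_opA_apply_eq_zero hub hvb hu hv hz
    rw [inner_add_right, ← adjoint_inner_left v11, ← adjoint_inner_left u10,
      ← adjoint_inner_left v12, h₁, h₂, inner_zero_left, inner_zero_left, add_zero]
  obtain ⟨x, hx⟩ : ∃ x, opA u11 v11 x = v11 (u10 b) + v12 c :=
    ⟨X _, apply_apply_eq_of_mem_orthogonal_ker_adjoint hX hr⟩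
  refine ⟨x, ?_⟩
  rw [opA_apply] at hx
  rw [map_add, add_right_comm, ← hx, sub_add_cancel]

theorem exists_mem_compCorr_corrGraph (hub : HasBlocks u u00 u01 u10 u11)
    (hvb : HasBlocks v v11 v12 v21 v22) (hu : IsUnitaryOp u) (hv : IsUnitaryOp v)
    (hX : ∀ b ∈ LinearMap.range (opA u11 v11).toLinearMap, opA u11 v11 (X b) = b)
    (a : V0p) (d : V2m) :
    ∃ b c, p2 (p2 a b) (p2 c d) ∈ compCorr (W0 := WithLp 2 (V0p × V0m))
      (W1 := WithLp 2 (V1p × V1m)) (W2 := WithLp 2 (V2p × V2m)) (corrGraph u) (corrGraph v) := by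
  obtain ⟨x, hx⟩ := exists_adjoint_intermediate hub hvb (fun x => (hu.1 x).le)
    (fun y => (hv.1 y).le) hX a d
  set y := adjoint v11 x + adjoint v21 d
  refine ⟨adjoint u00 a + adjoint u10 y, adjoint v12 x + adjoint v22 d,
    mem_compCorr_corrGraph_iff.mpr ⟨x, y, ?_, ?_⟩⟩
  · show u (p2 (adjoint u00 a + adjoint u10 y) x) = p2 a y
    rw [← hu.apply_adjoint_apply (p2 a y), hub.adjoint.apply_p2, hx]
  · show v (p2 y (adjoint v12 x + adjoint v22 d)) = p2 x d
    rw [← hv.apply_adjoint_apply (p2 x d), hvb.adjoint.apply_p2]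

theorem compCorr_corrGraph_eq_corrGraph_compUnitary (hub : HasBlocks u u00 u01 u10 u11)
    (hvb : HasBlocks v v11 v12 v21 v22) (hu : ∀ x, ‖u x‖ ≤ ‖x‖) (hv : ∀ y, ‖v y‖ ≤ ‖y‖)
    (hX : ∀ b ∈ LinearMap.range (opA u11 v11).toLinearMap, opA u11 v11 (X b) = b)
    (hY : ∀ b ∈ LinearMap.range (opB u11 v11).toLinearMap, opB u11 v11 (Y b) = b) :
    compCorr (W0 := WithLp 2 (V0p × V0m)) (W1 := WithLp 2 (V1p × V1m))
        (W2 := WithLp 2 (V2p × V2m)) (corrGraph u) (corrGraph v) =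
      corrGraph (compUnitary u00 u01 u10 u11 v11 v12 v21 v22 X Y) := by
  ext m
  rw [mem_compCorr_corrGraph_iff, mem_corrGraph_iff]
  simp only [hub.apply_p2_eq_p2_iff, hvb.apply_p2_eq_p2_iff]
  constructor
  · rintro ⟨x, y, ⟨ha, hy⟩, hx, hd⟩
    rw [compUnitary_apply_of_intermediate hub hvb hu hv hX hY hy hx, ha, hd]
  · intro hm
    obtain ⟨x, hx⟩ := exists_intermediate hub hvb hu hv hX m.fst.snd m.snd.fst
    rw [compUnitary_apply_of_intermediate hub hvb hu hv hX hY rfl hx, p2_inj] at hm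
    exact ⟨x, _, ⟨hm.1, rfl⟩, hx, hm.2⟩

end Composition

section Statement15

variable {V0p V0m V1p V1m V2p V2m : Type*}
  [NormedAddCommGroup V0p] [InnerProductSpace ℝ V0p] [CompleteSpace V0p]
  [NormedAddCommGroup V0m] [InnerProductSpace ℝ V0m] [CompleteSpace V0m]
  [NormedAddCommGroup V1p] [InnerProductSpace ℝ V1p] [CompleteSpace V1p]
  [NormedAddCommGroup V1m] [InnerProductSpace ℝ V1m] [CompleteSpace V1m]
  [NormedAddCommGroup V2p] [InnerProductSpace ℝ V2p] [CompleteSpace V2p]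
  [NormedAddCommGroup V2m] [InnerProductSpace ℝ V2m] [CompleteSpace V2m]

theorem compCorr_lagrangian_of_closed_range_general
    (u : WithLp 2 (V0m × V1p) →L[ℝ] WithLp 2 (V0p × V1m))
    (v : WithLp 2 (V1m × V2p) →L[ℝ] WithLp 2 (V1p × V2m))
    (u00 : V0m →L[ℝ] V0p) (u01 : V1p →L[ℝ] V0p) (u10 : V0m →L[ℝ] V1m) (u11 : V1p →L[ℝ] V1m)
    (v11 : V1m →L[ℝ] V1p) (v12 : V2p →L[ℝ] V1p) (v21 : V1m →L[ℝ] V2m) (v22 : V2p →L[ℝ] V2m)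
    (hub : ∀ x : WithLp 2 (V0m × V1p),
      u x = p2 (u00 x.fst + u01 x.snd) (u10 x.fst + u11 x.snd))
    (hvb : ∀ y : WithLp 2 (V1m × V2p),
      v y = p2 (v11 y.fst + v12 y.snd) (v21 y.fst + v22 y.snd))
    (hu : IsUnitaryOp u) (hv : IsUnitaryOp v)
    (X : V1p →L[ℝ] V1p) (Y : V1m →L[ℝ] V1m)
    (hX2 : ∀ b ∈ LinearMap.range (opA u11 v11).toLinearMap, opA u11 v11 (X b) = b)
    (hY2 : ∀ b ∈ LinearMap.range (opB u11 v11).toLinearMap, opB u11 v11 (Y b) = b) :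
    IsLagCorr (Ap := V0p) (Am := V0m) (Bp := V2p) (Bm := V2m)
        (compCorr (W1 := WithLp 2 (V1p × V1m)) (corrGraph u) (corrGraph v)) ∧
      IsUnitaryOp (compUnitary u00 u01 u10 u11 v11 v12 v21 v22 X Y) ∧
      compCorr (W0 := WithLp 2 (V0p × V0m)) (W1 := WithLp 2 (V1p × V1m))
          (W2 := WithLp 2 (V2p × V2m)) (corrGraph u) (corrGraph v) =
        corrGraph (compUnitary u00 u01 u10 u11 v11 v12 v21 v22 X Y) := by
  have hEq := compCorr_corrGraph_eq_corrGraph_compUnitary hub hvb (fun x => (hu.1 x).le)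
    (fun y => (hv.1 y).le) hX2 hY2
  have hw : IsUnitaryOp (compUnitary u00 u01 u10 u11 v11 v12 v21 v22 X Y) := by
    refine ⟨norm_apply_eq_of_corrGraph_le_compCorr hu.1 hv.1 hEq.ge, fun t => ?_⟩
    obtain ⟨b, c, hm⟩ := exists_mem_compCorr_corrGraph hub hvb hu hv hX2 t.fst t.snd
    rw [hEq, mem_corrGraph_iff] at hm
    exact ⟨_, hm⟩
  exact ⟨hEq ▸ isLagCorr_corrGraph hw, hw, hEq⟩

/-- If `1 - v₁₁u₁₁` and `1 - u₁₁v₁₁` have closed range, then the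
composition `L₁₂ ∘ L₀₁` of the Lagrangian correspondences `L₀₁ = graph(u)` and
`L₁₂ = graph(v)` is a Lagrangian in `ΠV₀ ⊕ V₂`, namely the graph of the unitary `w` given
by the generalized inverses `X` of `1 - v₁₁u₁₁` and `Y` of `1 - u₁₁v₁₁`. -/
theorem compCorr_lagrangian_of_closed_range
    (u : WithLp 2 (V0m × V1p) →L[ℝ] WithLp 2 (V0p × V1m))
    (v : WithLp 2 (V1m × V2p) →L[ℝ] WithLp 2 (V1p × V2m))
    (u00 : V0m →L[ℝ] V0p) (u01 : V1p →L[ℝ] V0p) (u10 : V0m →L[ℝ] V1m) (u11 : V1p →L[ℝ] V1m)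
    (v11 : V1m →L[ℝ] V1p) (v12 : V2p →L[ℝ] V1p) (v21 : V1m →L[ℝ] V2m) (v22 : V2p →L[ℝ] V2m)
    (hub : ∀ x : WithLp 2 (V0m × V1p),
      u x = p2 (u00 x.fst + u01 x.snd) (u10 x.fst + u11 x.snd))
    (hvb : ∀ y : WithLp 2 (V1m × V2p),
      v y = p2 (v11 y.fst + v12 y.snd) (v21 y.fst + v22 y.snd))
    (hu : IsUnitaryOp u) (hv : IsUnitaryOp v)
    (hAcr : IsClosed ((LinearMap.range (opA u11 v11).toLinearMap : Submodule ℝ V1p) : Set V1p))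
    (hBcr : IsClosed ((LinearMap.range (opB u11 v11).toLinearMap : Submodule ℝ V1m) : Set V1m))
    (X : V1p →L[ℝ] V1p) (Y : V1m →L[ℝ] V1m)
    (hX1 : ∀ a ∈ (LinearMap.ker (opA u11 v11).toLinearMap)ᗮ, X (opA u11 v11 a) = a)
    (hX2 : ∀ b ∈ LinearMap.range (opA u11 v11).toLinearMap, opA u11 v11 (X b) = b)
    (hX3 : LinearMap.ker X.toLinearMap = (LinearMap.range (opA u11 v11).toLinearMap)ᗮ)
    (hY1 : ∀ a ∈ (LinearMap.ker (opB u11 v11).toLinearMap)ᗮ, Y (opB u11 v11 a) = a)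
    (hY2 : ∀ b ∈ LinearMap.range (opB u11 v11).toLinearMap, opB u11 v11 (Y b) = b)
    (hY3 : LinearMap.ker Y.toLinearMap = (LinearMap.range (opB u11 v11).toLinearMap)ᗮ) :
    IsLagCorr (Ap := V0p) (Am := V0m) (Bp := V2p) (Bm := V2m)
        (compCorr (W1 := WithLp 2 (V1p × V1m)) (corrGraph u) (corrGraph v)) ∧
      IsUnitaryOp (compUnitary u00 u01 u10 u11 v11 v12 v21 v22 X Y) ∧
      compCorr (W0 := WithLp 2 (V0p × V0m)) (W1 := WithLp 2 (V1p × V1m))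
          (W2 := WithLp 2 (V2p × V2m)) (corrGraph u) (corrGraph v) =
        corrGraph (compUnitary u00 u01 u10 u11 v11 v12 v21 v22 X Y) :=
  compCorr_lagrangian_of_closed_range_general u v u00 u01 u10 u11 v11 v12 v21 v22 hub hvb hu hv X Y
    hX2 hY2

end Statement15
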